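/- arXiv:1912.10996 — 3 statements merged into one kernel-verified Lean document; each statement's English description precedes it below -/
import Mathlib

section
/- Let α > 0 and β > 0 be real numbers. Then for every z ∈ ℂ the series ∑_{k=0}^∞ z^k / Γ(αk + β) is absolutely convergent (the family k ↦ z^k / Γ(αk + β) is summable). Consequently E_{α,β} is well defined on all of ℂ (an entire function). -/
/-!
The ratio of consecutive terms is `z / (Γ(x + α) / Γ(x))` with `x = αk + β`, and log-convexity of
`Γ` gives `Γ(x + α) / Γ(x) ≥ (x - 1) ^ α → ∞`, so the ratio test applies.
-/

open Filter

namespace Real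

theorem Gamma_mul_sub_one_rpow_le_Gamma_add {a x : ℝ} (ha : 0 < a) (hx : 1 < x) :
    Gamma x * (x - 1) ^ a ≤ Gamma (x + a) := by
  have hx1 : 0 < x - 1 := by linarith
  have hlog : log (Gamma x) - log (Gamma (x - 1)) = log (x - 1) := by
    rw [sub_eq_iff_eq_add, ← log_mul hx1.ne' (Gamma_pos_of_pos hx1).ne', ← Gamma_add_one hx1.ne',
      sub_add_cancel]
  have hslope := convexOn_log_Gamma.slope_mono_adjacent (Set.mem_Ioi.2 hx1)
    (Set.mem_Ioi.2 (by linarith : 0 < x + a)) (by linarith : x - 1 < x) (by linarith : x < x + a)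
  dsimp only [Function.comp_def] at hslope
  rw [hlog, sub_sub_cancel, div_one, add_sub_cancel_left, le_div_iff₀ ha] at hslope
  rw [← log_le_log_iff (by positivity) (Gamma_pos_of_pos (by linarith)),
    log_mul (Gamma_pos_of_pos (by linarith)).ne' (by positivity), log_rpow hx1]
  linarith

theorem tendsto_Gamma_add_div_Gamma_atTop {a : ℝ} (ha : 0 < a) :
    Tendsto (fun x => Gamma (x + a) / Gamma x) atTop atTop := by
  have hpow : Tendsto (fun x : ℝ => (x - 1) ^ a) atTop atTop :=
    (tendsto_rpow_atTop ha).comp (tendsto_atTop_add_const_right _ _ tendsto_id)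
  refine tendsto_atTop_mono' _ ?_ hpow
  filter_upwards [eventually_gt_atTop 1] with x hx
  rw [le_div_iff₀ (Gamma_pos_of_pos (by linarith)), mul_comm]
  exact Gamma_mul_sub_one_rpow_le_Gamma_add ha hx

end Real

theorem summable_pow_div_of_tendsto_norm_ratio_atTop {𝕜 : Type*} [NormedField 𝕜]
    [CompleteSpace 𝕜] {f : ℕ → 𝕜} (hf : ∀ k, f k ≠ 0)
    (h : Tendsto (fun k => ‖f (k + 1)‖ / ‖f k‖) atTop atTop) (z : 𝕜) :
    Summable (fun k => z ^ k / f k) := by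
  refine summable_of_ratio_norm_eventually_le (r := 1 / 2) (by norm_num) ?_
  filter_upwards [h.eventually_ge_atTop (2 * ‖z‖)] with k hk
  have hk₀ : 0 < ‖f k‖ := norm_pos_iff.2 (hf k)
  have hk₁ : 0 < ‖f (k + 1)‖ := norm_pos_iff.2 (hf (k + 1))
  rw [le_div_iff₀ hk₀] at hk
  rw [norm_div, norm_div, norm_pow, norm_pow, div_le_iff₀ hk₁, pow_succ]
  calc ‖z‖ ^ k * ‖z‖ = 1 / 2 * (‖z‖ ^ k / ‖f k‖) * (2 * ‖z‖ * ‖f k‖) := by field_simp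
    _ ≤ 1 / 2 * (‖z‖ ^ k / ‖f k‖) * ‖f (k + 1)‖ := by gcongr

/-- For `α, β > 0`, the Mittag-Leffler series `∑ z^k / Γ(αk+β)` is absolutely
convergent (summable) for every complex `z`; hence `E_{α,β}` is entire. -/
theorem mittagLeffler_summable
    (α β : ℝ) (hα : 0 < α) (hβ : 0 < β) :
    ∀ z : ℂ, Summable (fun k : ℕ => z ^ k / (Real.Gamma (α * k + β) : ℂ)) := by
  have hpos : ∀ k : ℕ, 0 < Real.Gamma (α * k + β) := fun k => Real.Gamma_pos_of_pos (by positivity)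
  have hargs : Tendsto (fun k : ℕ => α * k + β) atTop atTop :=
    tendsto_atTop_add_const_right _ _ (tendsto_natCast_atTop_atTop.const_mul_atTop hα)
  refine summable_pow_div_of_tendsto_norm_ratio_atTop
    (fun k => Complex.ofReal_ne_zero.2 (hpos k).ne') ?_
  refine ((Real.tendsto_Gamma_add_div_Gamma_atTop hα).comp hargs).congr fun k => ?_
  simp only [Function.comp_def, Complex.norm_real, Real.norm_of_nonneg (hpos _).le]
  push_cast
  ring_nf
end

section
/- Let 0 < α < 1, let m, n be positive integers with n > 1, m ≥ 3, m + n odd, and set ν = (m + n − 1)/2. Let p and q be real polynomials of degree ν with q(0) ≠ 0, and suppose that as x → 0⁺, p(x)/q(x) = −Γ(−α) x² ∑_{k=0}^{m−3} (−x)^k / Γ(αk + α) + O(x^{m−ν}). Then the global Padé error satisfies E_{α,α}(−x) − p(x)/(−Γ(−α) x² q(x)) = O(x^{m−ν−2}) as x → 0⁺. -/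
/-!
The coefficients `1 / Γ(αk + α)` of `E_{α,α}(-x)` are bounded, since `Γ` attains a positive
minimum on `(0, ∞)`; hence the series differs from its partial sum `S` of length `m - 2` by
`O(x^{m-2})`. Dividing the hypothesis by `-Γ(-α) x²`, which is positive because `-1 < -α < 0`,
gives `S - p / (-Γ(-α) x² q) = O(x^{m-ν-2})`, and `x^{m-2} ≤ x^{m-ν-2}` for `0 < x ≤ 1`.
-/

open Finset

namespace Real

theorem Gamma_neg_of_neg_one_lt_of_neg {s : ℝ} (h1 : -1 < s) (h0 : s < 0) : Gamma s < 0 := by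
  have hrec : Gamma (s + 1) = s * Gamma s := Gamma_add_one h0.ne
  exact neg_of_mul_pos_right (hrec ▸ Gamma_pos_of_pos (by linarith)) h0.le

theorem exists_inv_Gamma_le : ∃ B, ∀ s, 0 < s → (Gamma s)⁻¹ ≤ B := by
  obtain ⟨s₀, hs₀, hmin⟩ := exists_isMinOn_Gamma_Ioi
  exact ⟨(Gamma s₀)⁻¹, fun s hs =>
    inv_anti₀ (Gamma_pos_of_pos (by linarith [hs₀.1])) (hmin (Set.mem_Ioi.2 hs))⟩

end Real

theorem exists_abs_mittagLeffler_sub_sum_range_le {α β : ℝ} (hα : 0 ≤ α) (hβ : 0 < β) (N : ℕ) :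
    ∃ B ≥ 0, ∀ x : ℝ, |x| ≤ 1 / 2 →
      |∑' k : ℕ, (-x) ^ k / Real.Gamma (α * k + β)
        - ∑ k ∈ range N, (-x) ^ k / Real.Gamma (α * k + β)| ≤ B * |x| ^ N := by
  obtain ⟨B, hB⟩ := Real.exists_inv_Gamma_le
  have hΓ : ∀ k : ℕ, 0 < α * k + β := fun k => by positivity
  have hB0 : 0 ≤ B := (inv_nonneg.2 (Real.Gamma_pos_of_pos (hΓ 0)).le).trans (hB _ (hΓ 0))
  refine ⟨2 * B, by positivity, fun x hx => ?_⟩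
  set f : ℕ → ℝ := fun k => (-x) ^ k / Real.Gamma (α * k + β)
  have hf : ∀ k, ‖f k‖ ≤ B * |x| ^ k := fun k => by
    rw [Real.norm_eq_abs, abs_div, abs_pow, abs_neg, abs_of_pos (Real.Gamma_pos_of_pos (hΓ k)),
      div_eq_mul_inv, mul_comm]
    exact mul_le_mul_of_nonneg_right (hB _ (hΓ k)) (by positivity)
  have hx1 : |x| < 1 := by linarith
  have hsum : Summable f :=
    .of_norm_bounded ((summable_geometric_of_lt_one (abs_nonneg x) hx1).mul_left B) hf
  have hgeo := norm_sub_le_of_geometric_bound_of_hasSum hx1 hf hsum.hasSum N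
  rw [Real.norm_eq_abs, abs_sub_comm] at hgeo
  calc _ ≤ B * |x| ^ N / (1 - |x|) := hgeo
    _ ≤ 2 * B * |x| ^ N := by
      rw [div_le_iff₀ (by linarith)]
      nlinarith [mul_nonneg hB0 (pow_nonneg (abs_nonneg x) N)]

theorem abs_sub_div_le_of_abs_div_sub_le {a b c d x S : ℝ} {s : ℤ} (hd : 0 < d) (hx : 0 < x)
    (h : |a / b - d * x ^ 2 * S| ≤ c * x ^ s) :
    |S - a / (d * x ^ 2 * b)| ≤ c / d * x ^ (s - 2) := by
  have hdx : 0 < d * x ^ 2 := by positivity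
  have hsplit : S - a / (d * x ^ 2 * b) = -(a / b - d * x ^ 2 * S) / (d * x ^ 2) := by
    field_simp
    ring
  rw [hsplit, abs_div, abs_neg, abs_of_pos hdx, div_le_iff₀ hdx]
  calc _ ≤ c * x ^ s := h
    _ = c / d * x ^ (s - 2) * (d * x ^ 2) := by
      rw [zpow_sub₀ hx.ne', zpow_ofNat]
      field_simp

theorem globalPade_error_near_zero_beta_eq_alpha_general
    (α : ℝ) (hα0 : 0 < α) (hα1 : α < 1)
    (m ν : ℕ)
    (p q : Polynomial ℝ)
    (hyp : ∃ C > (0 : ℝ), ∃ δ > (0 : ℝ), ∀ x : ℝ, 0 < x → x < δ →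
      |p.eval x / q.eval x
        - (-Real.Gamma (-α)) * x ^ 2 * ∑ k ∈ Finset.range (m - 2), (-x) ^ k / Real.Gamma (α * k + α)|
      ≤ C * x ^ ((m : ℤ) - (ν : ℤ))) :
    ∃ C > (0 : ℝ), ∃ δ > (0 : ℝ), ∀ x : ℝ, 0 < x → x < δ →
      |(∑' k : ℕ, (-x) ^ k / Real.Gamma (α * k + α))
        - p.eval x / ((-Real.Gamma (-α)) * x ^ 2 * q.eval x)|
      ≤ C * x ^ ((m : ℤ) - (ν : ℤ) - 2) := by
  obtain ⟨C, hC, δ, hδ, hyp⟩ := hyp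
  obtain ⟨B, hB, htail⟩ := exists_abs_mittagLeffler_sub_sum_range_le hα0.le hα0 (m - 2)
  have hD : 0 < -Real.Gamma (-α) :=
    neg_pos.2 (Real.Gamma_neg_of_neg_one_lt_of_neg (by linarith) (by linarith))
  refine ⟨C / -Real.Gamma (-α) + B, by positivity, min δ (1 / 2), by positivity, fun x hx hxδ => ?_⟩
  have hxδ' : x < δ := hxδ.trans_le (min_le_left _ _)
  have hx2 : x ≤ 1 / 2 := hxδ.le.trans (min_le_right _ _)
  have hpow : x ^ (m - 2) ≤ x ^ ((m : ℤ) - (ν : ℤ) - 2) := by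
    rw [← zpow_natCast]
    exact zpow_le_zpow_right_of_le_one₀ hx (by linarith) (by omega)
  set S := ∑ k ∈ Finset.range (m - 2), (-x) ^ k / Real.Gamma (α * k + α)
  calc _ = |((∑' k : ℕ, (-x) ^ k / Real.Gamma (α * k + α)) - S)
          + (S - p.eval x / ((-Real.Gamma (-α)) * x ^ 2 * q.eval x))| := by ring_nf
    _ ≤ _ := abs_add_le _ _
    _ ≤ B * x ^ (m - 2) + C / -Real.Gamma (-α) * x ^ ((m : ℤ) - (ν : ℤ) - 2) := by
      refine add_le_add ?_ (abs_sub_div_le_of_abs_div_sub_le hD hx (hyp x hx hxδ'))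
      simpa [abs_of_pos hx] using htail x (by rwa [abs_of_pos hx])
    _ ≤ _ := by nlinarith

/-- Global Padé error near zero, case `β = α`: if `p/q` matches the local
expansion of the scaled Mittag-Leffler function to order `O(x^{m-ν})` as `x → 0⁺`,
then the Padé error for `E_{α,α}(-x)` is `O(x^{m-ν-2})` as `x → 0⁺`. -/
theorem globalPade_error_near_zero_beta_eq_alpha
    (α : ℝ) (hα0 : 0 < α) (hα1 : α < 1)
    (m n ν : ℕ) (hn : 1 < n) (hm : 3 ≤ m) (hodd : Odd (m + n)) (hν : 2 * ν + 1 = m + n)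
    (p q : Polynomial ℝ) (hp : p.natDegree = ν) (hqdeg : q.natDegree = ν)
    (hq0 : q.eval 0 ≠ 0)
    (hyp : ∃ C > (0 : ℝ), ∃ δ > (0 : ℝ), ∀ x : ℝ, 0 < x → x < δ →
      |p.eval x / q.eval x
        - (-Real.Gamma (-α)) * x ^ 2 * ∑ k ∈ Finset.range (m - 2), (-x) ^ k / Real.Gamma (α * k + α)|
      ≤ C * x ^ ((m : ℤ) - (ν : ℤ))) :
    ∃ C > (0 : ℝ), ∃ δ > (0 : ℝ), ∀ x : ℝ, 0 < x → x < δ →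
      |(∑' k : ℕ, (-x) ^ k / Real.Gamma (α * k + α))
        - p.eval x / ((-Real.Gamma (-α)) * x ^ 2 * q.eval x)|
      ≤ C * x ^ ((m : ℤ) - (ν : ℤ) - 2) :=
  globalPade_error_near_zero_beta_eq_alpha_general α hα0 hα1 m ν p q hyp
end

section
/- Let α > 0 and β > 0 be real numbers and define u(t) = Γ(β) t^{β−1} E_{α,β}(−t^α) for t > 0. Then u solves the fractional integral equation I^α u(t) + u(t) = t^{β−1} for all t > 0, i.e. (1/Γ(α)) ∫₀ᵗ (t − τ)^{α−1} · Γ(β) τ^{β−1} E_{α,β}(−τ^α) dτ + Γ(β) t^{β−1} E_{α,β}(−t^α) = t^{β−1} for every t > 0. -/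
/-!
Expanding `u(τ) = Γ(β) ∑ₖ (-1)ᵏ τ^(αk+β-1) / Γ(αk+β)` and integrating termwise, the Beta integral
`I^α τ^(b-1) = Γ(b) / Γ(α+b) · t^(α+b-1)` turns the `k`-th term of `u` into minus its `(k+1)`-st
term, so `I^α u(t) = -(u(t) - t^(β-1))`. Termwise integration is justified by absolute
convergence, which for the Mittag-Leffler series follows from the ratio test and the
log-convexity bound `Γ(s+a) ≥ (s-1)^a Γ(s)`.
-/

open Real MeasureTheory Set Filter

noncomputable def mittagLeffler (α β x : ℝ) : ℝ :=
  ∑' k : ℕ, x ^ k / Gamma (α * k + β)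

noncomputable def mittagLefflerTerm (α β τ : ℝ) (k : ℕ) : ℝ :=
  (-1) ^ k / Gamma (α * k + β) * τ ^ (α * k + β - 1)

noncomputable def riemannLiouville (a : ℝ) (f : ℝ → ℝ) (t : ℝ) : ℝ :=
  1 / Gamma a * ∫ τ in (0 : ℝ)..t, (t - τ) ^ (a - 1) * f τ

theorem Real.rpow_mul_Gamma_le_Gamma_add {s a : ℝ} (hs : 1 < s) (ha : 0 < a) :
    (s - 1) ^ a * Gamma s ≤ Gamma (s + a) := by
  have hs1 : 0 < s - 1 := sub_pos.2 hs
  have hslope := convexOn_log_Gamma.slope_mono_adjacent (mem_Ioi.2 hs1)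
    (mem_Ioi.2 (by linarith : (0 : ℝ) < s + a)) (sub_one_lt s) (lt_add_of_pos_right s ha)
  have hrec : Gamma s = (s - 1) * Gamma (s - 1) := by
    simpa using Gamma_add_one hs1.ne'
  have hlog : log (Gamma s) - log (Gamma (s - 1)) = log (s - 1) := by
    rw [hrec, log_mul hs1.ne' (Gamma_pos_of_pos hs1).ne', add_sub_cancel_right]
  simp only [Function.comp_apply, hlog, sub_sub_cancel, div_one, add_sub_cancel_left,
    le_div_iff₀ ha] at hslope
  rw [← log_le_log_iff (by positivity) (Gamma_pos_of_pos (by linarith)),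
    log_mul (by positivity) (Gamma_pos_of_pos (by linarith)).ne', log_rpow hs1]
  linarith

theorem summable_mittagLeffler {α : ℝ} (hα : 0 < α) (β x : ℝ) :
    Summable fun k : ℕ => x ^ k / Gamma (α * k + β) := by
  refine summable_of_ratio_norm_eventually_le (r := 1 / 2) (by norm_num) ?_
  have hlin : Tendsto (fun k : ℕ => α * k + β - 1) atTop atTop :=
    tendsto_atTop_add_const_right _ _ <| tendsto_atTop_add_const_right _ _ <|
      tendsto_natCast_atTop_atTop.const_mul_atTop hα
  filter_upwards [hlin.eventually_gt_atTop 0,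
    ((tendsto_rpow_atTop hα).comp hlin).eventually_ge_atTop (2 * |x|)] with k hk hkx
  have hΓ := rpow_mul_Gamma_le_Gamma_add (by linarith : 1 < α * k + β) hα
  have hΓpos : 0 < Gamma (α * k + β) := Gamma_pos_of_pos (by linarith)
  have hΓpos' : 0 < Gamma (α * k + β + α) := Gamma_pos_of_pos (by linarith)
  push_cast
  rw [show α * (k + 1 : ℝ) + β = α * k + β + α by ring, norm_div, norm_div, norm_pow, norm_pow,
    norm_of_nonneg hΓpos.le, norm_of_nonneg hΓpos'.le, norm_eq_abs, pow_succ,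
    div_le_iff₀ hΓpos']
  calc |x| ^ k * |x| = 1 / 2 * (|x| ^ k / Gamma (α * k + β)) * (2 * |x| * Gamma (α * k + β)) := by
        field_simp
    _ ≤ 1 / 2 * (|x| ^ k / Gamma (α * k + β)) * Gamma (α * k + β + α) := by
        gcongr
        exact (mul_le_mul_of_nonneg_right hkx hΓpos.le).trans hΓ

theorem ofReal_rpow_mul_one_sub_rpow {x : ℝ} (hx : x ∈ Icc (0 : ℝ) 1) (a b : ℝ) :
    ((x ^ (a - 1) * (1 - x) ^ (b - 1) : ℝ) : ℂ)
      = (x : ℂ) ^ (a - 1 : ℂ) * (1 - x : ℂ) ^ (b - 1 : ℂ) := by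
  rw [Complex.ofReal_mul, Complex.ofReal_cpow hx.1, Complex.ofReal_cpow (sub_nonneg.2 hx.2)]
  push_cast
  rfl

theorem intervalIntegrable_rpow_mul_one_sub_rpow {a b : ℝ} (ha : 0 < a) (hb : 0 < b) :
    IntervalIntegrable (fun x : ℝ => x ^ (a - 1) * (1 - x) ^ (b - 1)) volume 0 1 := by
  have h := (Complex.betaIntegral_convergent (u := a) (v := b) (by simpa) (by simpa)).norm
  refine h.congr fun x hx => ?_
  have hx' : x ∈ Icc (0 : ℝ) 1 := by
    rw [uIoc_of_le zero_le_one] at hx; exact Ioc_subset_Icc_self hx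
  rw [← ofReal_rpow_mul_one_sub_rpow hx', Complex.norm_real, norm_of_nonneg (by
    have := hx'.1; have := hx'.2; positivity)]

theorem integral_rpow_mul_one_sub_rpow {a b : ℝ} (ha : 0 < a) (hb : 0 < b) :
    ∫ x in (0 : ℝ)..1, x ^ (a - 1) * (1 - x) ^ (b - 1) = Gamma a * Gamma b / Gamma (a + b) := by
  apply Complex.ofReal_injective
  rw [← intervalIntegral.integral_ofReal, intervalIntegral.integral_congr fun x hx =>
    ofReal_rpow_mul_one_sub_rpow (by rwa [uIcc_of_le zero_le_one] at hx) a b]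
  change Complex.betaIntegral a b = _
  rw [Complex.betaIntegral_eq_Gamma_mul_div (u := a) (v := b) (by simpa) (by simpa)]
  push_cast [← Complex.Gamma_ofReal]
  rfl

theorem sub_mul_rpow_mul_mul_rpow {t x : ℝ} (ht : 0 < t) (hx : x ∈ Icc (0 : ℝ) 1) (a b : ℝ) :
    (t - t * x) ^ (a - 1) * (t * x) ^ (b - 1)
      = t ^ (a + b - 2) * (x ^ (b - 1) * (1 - x) ^ (a - 1)) := by
  rw [← mul_one_sub, mul_rpow ht.le (sub_nonneg.2 hx.2), mul_rpow ht.le hx.1,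
    show a + b - 2 = (a - 1) + (b - 1) by ring, rpow_add ht]
  ring

theorem intervalIntegrable_sub_rpow_mul_rpow {a b t : ℝ} (ha : 0 < a) (hb : 0 < b) (ht : 0 < t) :
    IntervalIntegrable (fun τ : ℝ => (t - τ) ^ (a - 1) * τ ^ (b - 1)) volume 0 t := by
  have h := ((intervalIntegrable_rpow_mul_one_sub_rpow hb ha).comp_mul_left (c := t⁻¹)).const_mul
    (t ^ (a + b - 2))
  rw [zero_div, one_div, inv_inv] at h
  refine h.congr fun τ hτ => ?_
  rw [uIoc_of_le ht.le] at hτ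
  have hx : t⁻¹ * τ ∈ Icc (0 : ℝ) 1 :=
    ⟨by have := hτ.1; positivity, by rw [inv_mul_le_one₀ ht]; exact hτ.2⟩
  rw [← sub_mul_rpow_mul_mul_rpow ht hx, mul_inv_cancel_left₀ ht.ne']

theorem integral_sub_rpow_mul_rpow {a b t : ℝ} (ha : 0 < a) (hb : 0 < b) (ht : 0 < t) :
    ∫ τ in (0 : ℝ)..t, (t - τ) ^ (a - 1) * τ ^ (b - 1)
      = Gamma a * Gamma b / Gamma (a + b) * t ^ (a + b - 1) := by
  have h := intervalIntegral.smul_integral_comp_mul_left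
    (fun τ : ℝ => (t - τ) ^ (a - 1) * τ ^ (b - 1)) t (a := 0) (b := 1)
  rw [mul_zero, mul_one, smul_eq_mul] at h
  rw [← h, intervalIntegral.integral_congr fun x hx =>
      sub_mul_rpow_mul_mul_rpow ht (by rwa [uIcc_of_le zero_le_one] at hx) a b,
    intervalIntegral.integral_const_mul, integral_rpow_mul_one_sub_rpow hb ha, add_comm b a,
    show a + b - 1 = (a + b - 2) + 1 by ring, rpow_add_one ht.ne']
  ring

theorem riemannLiouville_congr {a t : ℝ} {f g : ℝ → ℝ} (h : EqOn f g (uIoc 0 t)) :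
    riemannLiouville a f t = riemannLiouville a g t := by
  unfold riemannLiouville
  rw [intervalIntegral.integral_congr_ae (.of_forall fun τ hτ => by rw [h hτ])]

theorem riemannLiouville_tsum {a t : ℝ} (ha : 0 < a) (ht : 0 < t) {b c : ℕ → ℝ}
    (hb : ∀ k, 0 < b k)
    (hc : Summable fun k => c k * (Gamma (b k) / Gamma (a + b k) * t ^ (a + b k - 1))) :
    riemannLiouville a (fun τ => ∑' k, c k * τ ^ (b k - 1)) t
      = ∑' k, c k * (Gamma (b k) / Gamma (a + b k) * t ^ (a + b k - 1)) := by
  set F : ℕ → ℝ → ℝ := fun k τ => c k * ((t - τ) ^ (a - 1) * τ ^ (b k - 1))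
  have hΓa := Gamma_pos_of_pos ha
  have hF_int (k : ℕ) : Integrable (F k) (volume.restrict (Ioc 0 t)) :=
    (intervalIntegrable_iff_integrableOn_Ioc_of_le ht.le).1
      ((intervalIntegrable_sub_rpow_mul_rpow ha (hb k) ht).const_mul (c k))
  have hF_eq (k : ℕ) : ∫ τ in Ioc 0 t, F k τ
      = Gamma a * (c k * (Gamma (b k) / Gamma (a + b k) * t ^ (a + b k - 1))) := by
    rw [integral_const_mul, ← intervalIntegral.integral_of_le ht.le,
      integral_sub_rpow_mul_rpow ha (hb k) ht]
    ring
  have hF_norm (k : ℕ) : ∫ τ in Ioc 0 t, ‖F k τ‖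
      = |Gamma a * (c k * (Gamma (b k) / Gamma (a + b k) * t ^ (a + b k - 1)))| := by
    have hΓb := Gamma_pos_of_pos (hb k)
    have hΓab := Gamma_pos_of_pos (add_pos ha (hb k))
    rw [setIntegral_congr_fun measurableSet_Ioc
      (g := fun τ => |c k| * ((t - τ) ^ (a - 1) * τ ^ (b k - 1))) fun τ hτ => by
        rw [norm_mul, norm_eq_abs, norm_of_nonneg
          (mul_nonneg (rpow_nonneg (sub_nonneg.2 hτ.2) _) (rpow_nonneg hτ.1.le _))],
      integral_const_mul, ← intervalIntegral.integral_of_le ht.le,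
      integral_sub_rpow_mul_rpow ha (hb k) ht, abs_mul, abs_mul, abs_of_pos hΓa,
      abs_of_pos (by positivity : 0 < Gamma (b k) / Gamma (a + b k) * t ^ (a + b k - 1))]
    ring
  unfold riemannLiouville
  simp_rw [← tsum_mul_left (a := (t - _) ^ (a - 1)), mul_left_comm _ (c _)]
  rw [intervalIntegral.integral_of_le ht.le, ← integral_tsum_of_summable_integral_norm hF_int
    (by simpa only [hF_norm] using (hc.mul_left (Gamma a)).abs), tsum_congr hF_eq, tsum_mul_left]
  field_simp

theorem hasSum_mittagLefflerTerm {α : ℝ} (hα : 0 < α) (β : ℝ) {τ : ℝ} (hτ : 0 < τ) :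
    HasSum (mittagLefflerTerm α β τ) (τ ^ (β - 1) * mittagLeffler α β (-(τ ^ α))) := by
  have hterm (k : ℕ) : mittagLefflerTerm α β τ k
      = τ ^ (β - 1) * ((-(τ ^ α)) ^ k / Gamma (α * k + β)) := by
    rw [mittagLefflerTerm, neg_pow, show α * k + β - 1 = (β - 1) + α * k by ring, rpow_add hτ,
      rpow_mul hτ.le, rpow_natCast]
    ring
  rw [funext hterm]
  exact (summable_mittagLeffler hα β (-(τ ^ α))).hasSum.mul_left (τ ^ (β - 1))

theorem mittagLefflerTerm_succ {α β : ℝ} (hα : 0 < α) (hβ : 0 < β) (t : ℝ) (k : ℕ) :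
    mittagLefflerTerm α β t (k + 1) = -((-1) ^ k / Gamma (α * k + β)
      * (Gamma (α * k + β) / Gamma (α + (α * k + β)) * t ^ (α + (α * k + β) - 1))) := by
  have : Gamma (α * k + β) ≠ 0 := (Gamma_pos_of_pos (by positivity)).ne'
  rw [mittagLefflerTerm]
  push_cast
  rw [show α * (k + 1 : ℝ) + β = α + (α * k + β) by ring]
  field_simp
  ring

/-- The function `u(t) = Γ(β) t^{β-1} E_{α,β}(-t^α)` solves the fractional
integral equation `I^α u(t) + u(t) = t^{β-1}` for all `t > 0`. -/
theorem mittagLeffler_solves_fractional_integral_equation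
    (α β : ℝ) (hα : 0 < α) (hβ : 0 < β) :
    ∀ t : ℝ, 0 < t →
      (1 / Real.Gamma α) *
          (∫ τ in (0 : ℝ)..t, (t - τ) ^ (α - 1) *
            (Real.Gamma β * τ ^ (β - 1) * ∑' k : ℕ, (-(τ ^ α)) ^ k / Real.Gamma (α * k + β)))
        + Real.Gamma β * t ^ (β - 1) * ∑' k : ℕ, (-(t ^ α)) ^ k / Real.Gamma (α * k + β)
      = t ^ (β - 1) := by
  intro t ht
  have hw (τ : ℝ) (hτ : 0 < τ) := hasSum_mittagLefflerTerm hα β hτ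
  have hu : EqOn (fun τ => Gamma β * τ ^ (β - 1) * mittagLeffler α β (-(τ ^ α)))
      (fun τ => ∑' k : ℕ, Gamma β * ((-1) ^ k / Gamma (α * k + β)) * τ ^ ((α * k + β) - 1))
      (uIoc 0 t) := fun τ hτ => by
    rw [uIoc_of_le ht.le] at hτ
    simp only [mul_assoc, ← (hw τ hτ.1).tsum_eq, ← tsum_mul_left, mittagLefflerTerm]
  have hshift (k : ℕ) : Gamma β * ((-1) ^ k / Gamma (α * k + β))
      * (Gamma (α * k + β) / Gamma (α + (α * k + β)) * t ^ (α + (α * k + β) - 1))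
      = -(Gamma β * mittagLefflerTerm α β t (k + 1)) := by
    rw [mittagLefflerTerm_succ hα hβ, mul_neg, neg_neg, mul_assoc]
  change riemannLiouville α (fun τ => Gamma β * τ ^ (β - 1) * mittagLeffler α β (-(τ ^ α))) t
    + Gamma β * t ^ (β - 1) * mittagLeffler α β (-(t ^ α)) = t ^ (β - 1)
  rw [riemannLiouville_congr hu, riemannLiouville_tsum hα ht (fun k => by positivity)
      ((((hw t ht).summable.comp_injective (add_left_injective 1)).mul_left _).neg.congr
        fun k => (hshift k).symm),
    tsum_congr hshift, tsum_neg, tsum_mul_left, mul_assoc, ← (hw t ht).tsum_eq,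
    (hw t ht).summable.tsum_eq_zero_add]
  simp only [mittagLefflerTerm, pow_zero, CharP.cast_eq_zero, mul_zero, zero_add]
  field_simp [(Gamma_pos_of_pos hβ).ne']
  ring
end
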